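/- Let H be a real Hilbert space, let ℓ > 0, μ > 0, ε ≥ 0, D ≥ 0, G ≥ 0, let T ≥ 1 be an integer, and let η satisfy 0 < η < μ/ℓ² and 2η(μ − ηℓ²) ≤ 1; set ρ := √(1 − 2η(μ − ηℓ²)) ∈ [0,1). For each t = 1,…,T let L_t : H → ℝ be convex and differentiable with gradient ∇L_t Lipschitz with constant ℓ, and let f_t★ ∈ H be a global minimizer of L_t satisfying L_t(f) − L_t(f_t★) ≥ μ‖f − f_t★‖² for all f ∈ H. Let f_1,…,f_{T+1} ∈ H satisfy the inexact gradient step ‖f_{t+1} − (f_t − η ∇L_t(f_t))‖ ≤ ε, the bound ‖f_t − f_t★‖ ≤ D, and the gradient bound ‖∇L_t(f_t)‖ ≤ G for all t = 1,…,T. Then the dynamic regret satisfies Σ_{t=1}^T (L_t(f_t) − L_t(f_t★)) ≤ G · ( ‖f_1 − f_1★‖ + (T−1)·√(2εD + 2ε²) + Σ_{t=1}^{T−1} ‖f_{t+1}★ − f_t★‖ ) / (1 − ρ). -/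

import Mathlib

open InnerProductSpace

private lemma grad_convex_ineq' {H : Type*} [NormedAddCommGroup H] [InnerProductSpace ℝ H]
    [CompleteSpace H] {L : H → ℝ} {g x : H}
    (hc : ConvexOn ℝ Set.univ L) (hg : HasGradientAt L g x) (y : H) :
    L x + inner ℝ g (y - x) ≤ L y := by
  set φ : ℝ → H := fun s => x + s • (y - x) with hφdef
  have hF : HasFDerivAt L (toDual ℝ H g) x := hasGradientAt_iff_hasFDerivAt.mp hg
  have hline : HasDerivAt φ (y - x) 0 := by
    simpa [hφdef] using ((hasDerivAt_id (0 : ℝ)).smul_const (y - x)).const_add x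
  have hφ0 : φ 0 = x := by simp [hφdef]
  have hF' : HasFDerivAt L (toDual ℝ H g) (φ 0) := by rwa [hφ0]
  have hφ : HasDerivAt (L ∘ φ) ((inner ℝ g (y - x) : ℝ)) 0 := by
    simpa using hF'.comp_hasDerivAt 0 hline
  have hslope : Filter.Tendsto (slope (L ∘ φ) 0) (nhdsWithin 0 (Set.Ioi 0))
      (nhds (inner ℝ g (y - x) : ℝ)) :=
    (hasDerivAt_iff_tendsto_slope.mp hφ).mono_left
      (nhdsWithin_mono 0 (fun s hs => ne_of_gt hs))
  have hbound : ∀ s ∈ Set.Ioo (0:ℝ) 1, slope (L ∘ φ) 0 s ≤ L y - L x := by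
    intro s hs
    have hmem : φ s = (1 - s) • x + s • y := by
      simp [hφdef, smul_sub, sub_smul]; abel
    have hcv := hc.2 (Set.mem_univ x) (Set.mem_univ y) (by linarith [hs.2] : (0:ℝ) ≤ 1 - s)
      (le_of_lt hs.1) (by ring)
    rw [← hmem] at hcv
    simp only [smul_eq_mul] at hcv
    rw [slope_def_field, sub_zero, div_le_iff₀ hs.1]
    simp only [Function.comp, hφ0]
    nlinarith [hcv]
  have key : (inner ℝ g (y - x) : ℝ) ≤ L y - L x := by
    refine le_of_tendsto hslope ?_
    filter_upwards [Ioo_mem_nhdsGT_of_mem (Set.mem_Ico.mpr ⟨le_refl (0:ℝ), one_pos⟩)]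
      with s hs using hbound s hs
  linarith

/-- Theorem 2(ii), explicit form: dynamic regret of inexact gradient descent for strongly
convex smooth losses in terms of the path length, the compression budget, and the
contraction factor `ρ`. -/
theorem stmt_11 {H : Type*} [NormedAddCommGroup H] [InnerProductSpace ℝ H] [CompleteSpace H]
    (ℓ μ ε D G : ℝ) (hℓ : 0 < ℓ) (hμ : 0 < μ) (hε : 0 ≤ ε) (hD : 0 ≤ D) (hG : 0 ≤ G)
    (T : ℕ) (hT : 1 ≤ T)
    (η : ℝ) (hη : 0 < η) (hημ : η < μ / ℓ ^ 2) (hcontr : 2 * η * (μ - η * ℓ ^ 2) ≤ 1)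
    (L : ℕ → H → ℝ) (L' : ℕ → H → H)
    (hconv : ∀ t ∈ Finset.Icc 1 T, ConvexOn ℝ Set.univ (L t))
    (hgrad : ∀ t ∈ Finset.Icc 1 T, ∀ x : H, HasGradientAt (L t) (L' t x) x)
    (hlip : ∀ t ∈ Finset.Icc 1 T, ∀ f g : H, ‖L' t f - L' t g‖ ≤ ℓ * ‖f - g‖)
    (fstar : ℕ → H) (hmin : ∀ t ∈ Finset.Icc 1 T, ∀ f : H, L t (fstar t) ≤ L t f)
    (hsc : ∀ t ∈ Finset.Icc 1 T, ∀ f : H, μ * ‖f - fstar t‖ ^ 2 ≤ L t f - L t (fstar t))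
    (f : ℕ → H)
    (hstep : ∀ t ∈ Finset.Icc 1 T, ‖f (t + 1) - (f t - η • L' t (f t))‖ ≤ ε)
    (hdist : ∀ t ∈ Finset.Icc 1 T, ‖f t - fstar t‖ ≤ D)
    (hgradbd : ∀ t ∈ Finset.Icc 1 T, ‖L' t (f t)‖ ≤ G) :
    ∑ t ∈ Finset.Icc 1 T, (L t (f t) - L t (fstar t)) ≤
      G * (‖f 1 - fstar 1‖ + ((T : ℝ) - 1) * Real.sqrt (2 * ε * D + 2 * ε ^ 2)
            + ∑ t ∈ Finset.Icc 1 (T - 1), ‖fstar (t + 1) - fstar t‖)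
        / (1 - Real.sqrt (1 - 2 * η * (μ - η * ℓ ^ 2))) := by
  set ρ : ℝ := Real.sqrt (1 - 2 * η * (μ - η * ℓ ^ 2)) with hρdef
  set b : ℝ := Real.sqrt (2 * ε * D + 2 * ε ^ 2) with hbdef
  have hd : ∀ t, (0:ℝ) ≤ ‖f t - fstar t‖ := fun t => norm_nonneg _
  have hℓ2 : (0:ℝ) < ℓ ^ 2 := by positivity
  have hμη : 0 < μ - η * ℓ ^ 2 := by
    have := (lt_div_iff₀ hℓ2).mp hημ
    linarith
  have h01 : 0 ≤ 1 - 2 * η * (μ - η * ℓ ^ 2) := by linarith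
  have hρ0 : 0 ≤ ρ := Real.sqrt_nonneg _
  have hρsq : ρ ^ 2 = 1 - 2 * η * (μ - η * ℓ ^ 2) := Real.sq_sqrt h01
  have hρ1 : ρ < 1 := by nlinarith [mul_pos hη hμη]
  have h1ρ : 0 < 1 - ρ := by linarith
  have hb0 : 0 ≤ b := Real.sqrt_nonneg _
  have hεb : ε ≤ b := by
    have hε2 : ε ^ 2 ≤ 2 * ε * D + 2 * ε ^ 2 := by nlinarith
    calc ε = Real.sqrt (ε ^ 2) := (Real.sqrt_sq hε).symm
      _ ≤ b := Real.sqrt_le_sqrt hε2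
  -- gradient vanishes at minimizers
  have hgz : ∀ t ∈ Finset.Icc 1 T, L' t (fstar t) = 0 := by
    intro t ht
    have h1 : HasFDerivAt (L t) (toDual ℝ H (L' t (fstar t))) (fstar t) :=
      hasGradientAt_iff_hasFDerivAt.mp (hgrad t ht (fstar t))
    have h2 : IsLocalMin (L t) (fstar t) := Filter.Eventually.of_forall (hmin t ht)
    have h3 := h2.hasFDerivAt_eq_zero h1
    have h4 : toDual ℝ H (L' t (fstar t)) = toDual ℝ H 0 := by simpa using h3
    exact (toDual ℝ H).injective h4
  -- convexity gradient inequality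
  have hcvx : ∀ t ∈ Finset.Icc 1 T,
      L t (f t) - L t (fstar t) ≤ inner ℝ (L' t (f t)) (f t - fstar t) := by
    intro t ht
    have h := grad_convex_ineq' (hconv t ht) (hgrad t ht (f t)) (fstar t)
    have h2 : (inner ℝ (L' t (f t)) (fstar t - f t) : ℝ)
        = - inner ℝ (L' t (f t)) (f t - fstar t) := by
      rw [← neg_sub (f t) (fstar t), inner_neg_right]
    rw [h2] at h
    linarith
  -- per-step regret bound
  have hregret : ∀ t ∈ Finset.Icc 1 T,
      L t (f t) - L t (fstar t) ≤ G * ‖f t - fstar t‖ := by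
    intro t ht
    have h1 := hcvx t ht
    have h2 := real_inner_le_norm (L' t (f t)) (f t - fstar t)
    have h3 := hgradbd t ht
    nlinarith [hd t]
  -- contraction of the exact gradient step
  have hcontr' : ∀ t ∈ Finset.Icc 1 T,
      ‖(f t - η • L' t (f t)) - fstar t‖ ≤ ρ * ‖f t - fstar t‖ := by
    intro t ht
    have hgl : ‖L' t (f t)‖ ≤ ℓ * ‖f t - fstar t‖ := by
      have := hlip t ht (f t) (fstar t)
      rwa [hgz t ht, sub_zero] at this
    have hinner : μ * ‖f t - fstar t‖ ^ 2 ≤ inner ℝ (L' t (f t)) (f t - fstar t) :=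
      le_trans (hsc t ht (f t)) (hcvx t ht)
    have hid : (f t - η • L' t (f t)) - fstar t = (f t - fstar t) - η • L' t (f t) := by
      abel
    have hsq : ‖(f t - fstar t) - η • L' t (f t)‖ ^ 2 ≤ (ρ * ‖f t - fstar t‖) ^ 2 := by
      have hexp : ‖(f t - fstar t) - η • L' t (f t)‖ ^ 2
          = ‖f t - fstar t‖ ^ 2 - 2 * (η * inner ℝ (f t - fstar t) (L' t (f t)))
            + η ^ 2 * ‖L' t (f t)‖ ^ 2 := by
        rw [norm_sub_sq_real, real_inner_smul_right, norm_smul]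
        simp [Real.norm_eq_abs, mul_pow, sq_abs]
      rw [hexp, real_inner_comm]
      have hg2 : ‖L' t (f t)‖ ^ 2 ≤ ℓ ^ 2 * ‖f t - fstar t‖ ^ 2 := by
        have := pow_le_pow_left₀ (norm_nonneg (L' t (f t))) hgl 2
        rwa [mul_pow] at this
      have e1 : η * (μ * ‖f t - fstar t‖ ^ 2) ≤ η * inner ℝ (L' t (f t)) (f t - fstar t) :=
        mul_le_mul_of_nonneg_left hinner (le_of_lt hη)
      have e2 : η ^ 2 * ‖L' t (f t)‖ ^ 2 ≤ η ^ 2 * (ℓ ^ 2 * ‖f t - fstar t‖ ^ 2) :=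
        mul_le_mul_of_nonneg_left hg2 (sq_nonneg η)
      have e3 : 0 ≤ η ^ 2 * (ℓ ^ 2 * ‖f t - fstar t‖ ^ 2) := by positivity
      have hr : (ρ * ‖f t - fstar t‖) ^ 2 = ‖f t - fstar t‖ ^ 2
          - 2 * (η * (μ * ‖f t - fstar t‖ ^ 2))
          + 2 * (η ^ 2 * (ℓ ^ 2 * ‖f t - fstar t‖ ^ 2)) := by
        rw [mul_pow, hρsq]; ring
      rw [hr]
      linarith only [e1, e2, e3]
    rw [hid]
    calc ‖(f t - fstar t) - η • L' t (f t)‖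
        = Real.sqrt (‖(f t - fstar t) - η • L' t (f t)‖ ^ 2) :=
          (Real.sqrt_sq (norm_nonneg _)).symm
      _ ≤ Real.sqrt ((ρ * ‖f t - fstar t‖) ^ 2) := Real.sqrt_le_sqrt hsq
      _ = ρ * ‖f t - fstar t‖ := Real.sqrt_sq (mul_nonneg hρ0 (hd t))
  -- chain inequality
  have hchain : ∀ t ∈ Finset.Icc 1 T,
      ‖f (t+1) - fstar (t+1)‖ ≤ ρ * ‖f t - fstar t‖ + b + ‖fstar (t+1) - fstar t‖ := by
    intro t ht
    have h1 := hstep t ht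
    have h2 := hcontr' t ht
    have hid : f (t+1) - fstar (t+1)
        = (f (t+1) - (f t - η • L' t (f t))) + ((f t - η • L' t (f t)) - fstar t)
          - (fstar (t+1) - fstar t) := by abel
    calc ‖f (t+1) - fstar (t+1)‖
        ≤ ‖(f (t+1) - (f t - η • L' t (f t))) + ((f t - η • L' t (f t)) - fstar t)‖
          + ‖fstar (t+1) - fstar t‖ := by rw [hid]; exact norm_sub_le _ _
      _ ≤ ‖f (t+1) - (f t - η • L' t (f t))‖ + ‖(f t - η • L' t (f t)) - fstar t‖
          + ‖fstar (t+1) - fstar t‖ := by gcongr; exact norm_add_le _ _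
      _ ≤ ρ * ‖f t - fstar t‖ + b + ‖fstar (t+1) - fstar t‖ := by linarith
  -- summed recursion by induction
  have hind : ∀ N : ℕ, N + 1 ≤ T →
      ∑ t ∈ Finset.Icc 1 (N+1), ‖f t - fstar t‖
        ≤ ‖f 1 - fstar 1‖ + ρ * ∑ t ∈ Finset.Icc 1 N, ‖f t - fstar t‖
          + ∑ t ∈ Finset.Icc 1 N, (b + ‖fstar (t+1) - fstar t‖) := by
    intro N
    induction N with
    | zero => intro _; simp
    | succ n ih =>
      intro hn1
      have hn : n + 1 ≤ T := by omega
      rw [Finset.sum_Icc_succ_top (by omega : 1 ≤ n + 1 + 1),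
          Finset.sum_Icc_succ_top (by omega : 1 ≤ n + 1),
          Finset.sum_Icc_succ_top (by omega : 1 ≤ n + 1)]
      have hc := hchain (n+1) (Finset.mem_Icc.mpr ⟨by omega, hn⟩)
      have hih := ih hn
      rw [Finset.sum_Icc_succ_top (by omega : 1 ≤ n + 1)] at hih
      have hdistrib : ρ * ((∑ t ∈ Finset.Icc 1 n, ‖f t - fstar t‖) + ‖f (n+1) - fstar (n+1)‖)
          = ρ * (∑ t ∈ Finset.Icc 1 n, ‖f t - fstar t‖) + ρ * ‖f (n+1) - fstar (n+1)‖ := by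
        ring
      rw [hdistrib]
      linarith only [hc, hih]
  -- apply with N = T - 1
  have hTm : T - 1 + 1 = T := by omega
  have hmain := hind (T - 1) (by omega)
  rw [hTm] at hmain
  set S : ℝ := ∑ t ∈ Finset.Icc 1 T, ‖f t - fstar t‖ with hSdef
  have hsub : ∑ t ∈ Finset.Icc 1 (T-1), ‖f t - fstar t‖ ≤ S := by
    apply Finset.sum_le_sum_of_subset_of_nonneg
      (Finset.Icc_subset_Icc_right (by omega))
    intro i _ _; exact hd i
  have hρS : ρ * ∑ t ∈ Finset.Icc 1 (T-1), ‖f t - fstar t‖ ≤ ρ * S :=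
    mul_le_mul_of_nonneg_left hsub hρ0
  have hC : ∑ t ∈ Finset.Icc 1 (T-1), (b + ‖fstar (t+1) - fstar t‖)
      = ((T:ℝ) - 1) * b + ∑ t ∈ Finset.Icc 1 (T-1), ‖fstar (t+1) - fstar t‖ := by
    rw [Finset.sum_add_distrib, Finset.sum_const, nsmul_eq_mul, Nat.card_Icc]
    congr 2
    have h1 : (T - 1 + 1 - 1 : ℕ) = T - 1 := by omega
    rw [h1, Nat.cast_sub hT, Nat.cast_one]
  rw [hC] at hmain
  have hSbound : (1 - ρ) * S ≤ ‖f 1 - fstar 1‖ + ((T:ℝ) - 1) * b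
      + ∑ t ∈ Finset.Icc 1 (T-1), ‖fstar (t+1) - fstar t‖ := by nlinarith [hρS, hmain]
  have hSdiv : S ≤ (‖f 1 - fstar 1‖ + ((T:ℝ) - 1) * b
      + ∑ t ∈ Finset.Icc 1 (T-1), ‖fstar (t+1) - fstar t‖) / (1 - ρ) :=
    (le_div_iff₀ h1ρ).mpr (by linarith [hSbound])
  calc ∑ t ∈ Finset.Icc 1 T, (L t (f t) - L t (fstar t))
      ≤ ∑ t ∈ Finset.Icc 1 T, G * ‖f t - fstar t‖ := Finset.sum_le_sum hregret
    _ = G * S := by rw [hSdef, Finset.mul_sum]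
    _ ≤ G * ((‖f 1 - fstar 1‖ + ((T:ℝ) - 1) * b
          + ∑ t ∈ Finset.Icc 1 (T-1), ‖fstar (t+1) - fstar t‖) / (1 - ρ)) :=
        mul_le_mul_of_nonneg_left hSdiv hG
    _ = G * (‖f 1 - fstar 1‖ + ((T:ℝ) - 1) * b
          + ∑ t ∈ Finset.Icc 1 (T-1), ‖fstar (t+1) - fstar t‖) / (1 - ρ) := by
        rw [mul_div_assoc]
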